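/- arXiv:1502.04346 — 6 statements merged into one kernel-verified Lean document; each statement's English description precedes it below -/
import Mathlib

section
/- For every natural number n, F_n = ∏_{t=1}^{n-1} (α - β ζ^t), where α = (1+√5)/2, β = (1-√5)/2, and ζ is a primitive n-th root of unity (in the complex numbers). -/
/-!
The numbers `ζ ^ t`, `0 ≤ t < n`, are all the `n`-th roots of unity, so
`α ^ n - β ^ n = ∏_{t < n} (α - β ζ ^ t)`. The factor `t = 0` is `α - β = √5`, and Binet's formula
`F_n √5 = α ^ n - β ^ n` lets us cancel it.
-/

open Finset Polynomial

namespace IsPrimitiveRoot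

variable {R : Type*} [CommRing R] [IsDomain R] {ζ : R} {n : ℕ}

theorem prod_nthRootsFinset_one {M : Type*} [CommMonoid M] (h : IsPrimitiveRoot ζ n)
    (hn : 0 < n) (f : R → M) :
    ∏ x ∈ nthRootsFinset n (1 : R), f x = ∏ t ∈ range n, f (ζ ^ t) := by
  refine (prod_nbij (ζ ^ ·) (fun t _ => ?_) h.injOn_pow (fun x hx => ?_) fun _ _ => rfl).symm
  · rw [Polynomial.mem_nthRootsFinset hn, ← pow_mul, mul_comm, pow_mul, h.pow_eq_one, one_pow]
  · have : NeZero n := .of_pos hn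
    obtain ⟨t, ht, rfl⟩ := h.eq_pow_of_pow_eq_one ((Polynomial.mem_nthRootsFinset hn 1).1 hx)
    exact ⟨t, mem_range.2 ht, rfl⟩

theorem pow_sub_pow_eq_prod_range (h : IsPrimitiveRoot ζ n) (hn : 0 < n) (x y : R) :
    x ^ n - y ^ n = ∏ t ∈ range n, (x - y * ζ ^ t) := by
  simp_rw [h.pow_sub_pow_eq_prod_sub_mul x y hn, h.prod_nthRootsFinset_one hn, mul_comm y]

theorem pow_sub_pow_eq_sub_mul_prod_Icc (h : IsPrimitiveRoot ζ n) (hn : 0 < n) (x y : R) :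
    x ^ n - y ^ n = (x - y) * ∏ t ∈ Icc 1 (n - 1), (x - y * ζ ^ t) := by
  rw [h.pow_sub_pow_eq_prod_range hn, prod_range_eq_mul_Ico _ hn, pow_zero, mul_one,
    ← Icc_sub_one_right_eq_Ico_of_not_isMin (by simpa using hn.ne')]

end IsPrimitiveRoot

theorem Real.fib_mul_sqrt_five (n : ℕ) :
    Nat.fib n * √5 = ((1 + √5) / 2) ^ n - ((1 - √5) / 2) ^ n := by
  rw [coe_fib_eq, div_mul_cancel₀ _ (by positivity)]

open Complex in
theorem fib_eq_prod (n : ℕ) (hn : 0 < n)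
    (ζ : ℂ) (hζ : ζ = Complex.exp (2 * Real.pi * Complex.I / n))
    (α β : ℂ) (hα : α = (1 + Real.sqrt 5) / 2) (hβ : β = (1 - Real.sqrt 5) / 2) :
    (Nat.fib n : ℂ) = ∏ t ∈ Finset.Icc 1 (n - 1), (α - β * ζ ^ t) := by
  have hprim : IsPrimitiveRoot ζ n := hζ ▸ Complex.isPrimitiveRoot_exp n hn.ne'
  have hsub : α - β = (√5 : ℝ) := by rw [hα, hβ]; ring
  have binet : (Nat.fib n : ℂ) * (√5 : ℝ) = α ^ n - β ^ n := by
    rw [hα, hβ]; exact_mod_cast Real.fib_mul_sqrt_five n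
  refine mul_right_cancel₀ (b := ((√5 : ℝ) : ℂ)) (by norm_num) ?_
  rw [binet, hprim.pow_sub_pow_eq_sub_mul_prod_Icc hn, hsub, mul_comm]
end

section
/- For every odd prime p different from 5, p divides F_{(p^2-1)/2}. -/
/-!
Work in a commutative ring of characteristic `p` containing a root `φ` of `X² - X - 1`, with
conjugate `ψ = 1 - φ`. Binet's formula reads `F n * (φ - ψ) = φ ^ n - ψ ^ n`, and `(φ - ψ)² = 5`.
By Fermat, `5 ^ ((p² - 1) / 2) = 1`, so the `p²`-th power Frobenius fixes `φ - ψ`, hence `φ`;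
thus `φ ^ (p² - 1) = 1`. For `N = (p² - 1) / 2` this makes `φ ^ N` its own inverse, while
`φ ^ N * ψ ^ N = (φψ) ^ N = (-1) ^ N = 1` as `N` is even, so `φ ^ N = ψ ^ N` and
`F N * (φ - ψ) = 0`; multiplying by `φ - ψ` gives `5 * F N = 0`.
-/

open Polynomial

theorem IsUnit.pow_sub_one_eq_one {M : Type*} [Monoid M] {x : M} (hx : IsUnit x) {n : ℕ}
    (hn : n ≠ 0) (h : x ^ n = x) : x ^ (n - 1) = 1 :=
  hx.mul_left_cancel <| by rw [← pow_succ', Nat.sub_add_cancel (Nat.one_le_iff_ne_zero.2 hn), h,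
    mul_one]

section GoldenRoot

variable {R : Type*} [CommRing R] {φ : R}

theorem two_mul_sub_one_sq_of_sq_eq_add_one (hφ : φ ^ 2 = φ + 1) : (2 * φ - 1) ^ 2 = 5 := by
  linear_combination 4 * hφ

theorem isUnit_of_sq_eq_add_one (hφ : φ ^ 2 = φ + 1) : IsUnit φ :=
  .of_mul_eq_one (φ - 1) (by linear_combination hφ)

theorem fib_mul_two_mul_sub_one (hφ : φ ^ 2 = φ + 1) (n : ℕ) :
    (Nat.fib n : R) * (2 * φ - 1) = φ ^ n - (1 - φ) ^ n := by
  induction n using Nat.twoStepInduction with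
  | zero => simp
  | one => simp only [Nat.fib_one, Nat.cast_one, pow_one]; ring
  | more n ih₀ ih₁ =>
    rw [Nat.fib_add_two, Nat.cast_add]
    linear_combination ih₀ + ih₁ + ((1 - φ) ^ n - φ ^ n) * hφ

variable {p : ℕ} [Fact p.Prime] [CharP R p]

theorem natCast_pow_sub_one_eq_one {a : ℕ} (ha : ¬p ∣ a) : (a : R) ^ (p - 1) = 1 :=
  ((CharP.isUnit_natCast_iff Fact.out).2 ha).pow_sub_one_eq_one (Fact.out : p.Prime).ne_zero <|
    (frobenius_def p (a : R)).symm.trans (map_natCast _ a)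

theorem pow_sq_eq_self_of_sq_eq_natCast (hodd : Odd p) {a : ℕ} (ha : ¬p ∣ a) {x : R}
    (hx : x ^ 2 = a) : x ^ p ^ 2 = x := by
  have hfermat := natCast_pow_sub_one_eq_one (R := R) ha
  obtain ⟨k, rfl⟩ := hodd
  rw [Nat.add_sub_cancel] at hfermat
  calc x ^ (2 * k + 1) ^ 2 = x * ((x ^ 2) ^ (2 * k)) ^ (k + 1) := by ring
    _ = x := by rw [hx, hfermat, one_pow, mul_one]

theorem pow_sq_eq_self_of_sq_eq_add_one (hodd : Odd p) (h5 : ¬p ∣ 5) (hφ : φ ^ 2 = φ + 1) :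
    φ ^ p ^ 2 = φ := by
  have hp : p.Prime := Fact.out
  have h2 : IsUnit (2 : R) := (CharP.isUnit_ofNat_iff hp).2 fun h ↦
    hodd.not_two_dvd_nat (by have := (Nat.prime_dvd_prime_iff_eq hp Nat.prime_two).1 h; omega)
  have hfix := pow_sq_eq_self_of_sq_eq_natCast (x := 2 * φ - 1) hodd h5
    (by exact_mod_cast two_mul_sub_one_sq_of_sq_eq_add_one hφ)
  rw [← iterateFrobenius_def, map_sub, map_mul, map_ofNat, map_one, iterateFrobenius_def,
    sub_left_inj] at hfix
  exact h2.mul_left_cancel hfix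

theorem pow_half_sq_sub_one_eq (hodd : Odd p) (h5 : ¬p ∣ 5) (hφ : φ ^ 2 = φ + 1) :
    φ ^ ((p ^ 2 - 1) / 2) = (1 - φ) ^ ((p ^ 2 - 1) / 2) := by
  set N := (p ^ 2 - 1) / 2
  obtain ⟨k, hk⟩ := hodd
  have hsq : p ^ 2 = 4 * (k * k + k) + 1 := by subst hk; ring
  have hN : N + N = p ^ 2 - 1 := by omega
  have hNeven : Even N := ⟨k * k + k, by omega⟩
  have hu : φ ^ N * φ ^ N = 1 := by
    rw [← pow_add, hN]
    exact (isUnit_of_sq_eq_add_one hφ).pow_sub_one_eq_one (by omega)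
      (pow_sq_eq_self_of_sq_eq_add_one ⟨k, hk⟩ h5 hφ)
  have huv : φ ^ N * (1 - φ) ^ N = 1 := by
    rw [← mul_pow, show φ * (1 - φ) = -1 by linear_combination -hφ, hNeven.neg_one_pow]
  linear_combination (1 - φ) ^ N * hu - φ ^ N * huv

theorem prime_dvd_fib_of_sq_eq_add_one (hodd : Odd p) (h5 : ¬p ∣ 5) (hφ : φ ^ 2 = φ + 1) :
    p ∣ Nat.fib ((p ^ 2 - 1) / 2) := by
  have hzero := fib_mul_two_mul_sub_one hφ ((p ^ 2 - 1) / 2)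
  rw [pow_half_sq_sub_one_eq hodd h5 hφ, sub_self] at hzero
  have h5fib : ((Nat.fib ((p ^ 2 - 1) / 2) * 5 : ℕ) : R) = 0 := by
    push_cast
    linear_combination (2 * φ - 1) * hzero - _ * two_mul_sub_one_sq_of_sq_eq_add_one hφ
  rw [CharP.cast_eq_zero_iff R p] at h5fib
  exact ((Fact.out : p.Prime).dvd_mul.1 h5fib).resolve_right h5

end GoldenRoot

theorem prime_dvd_fib (p : ℕ) (hp : p.Prime) (hodd : Odd p) (h5 : p ≠ 5) :
    p ∣ Nat.fib ((p ^ 2 - 1) / 2) := by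
  have : Fact p.Prime := ⟨hp⟩
  obtain ⟨φ, hφ⟩ := IsAlgClosed.exists_root (X ^ 2 - X - 1 : (AlgebraicClosure (ZMod p))[X])
    (ne_of_eq_of_ne (by compute_degree!) two_ne_zero)
  exact prime_dvd_fib_of_sq_eq_add_one hodd
    (fun h ↦ h5 ((Nat.prime_dvd_prime_iff_eq hp Nat.prime_five).1 h))
    (by simpa [sub_eq_zero, sub_sub] using hφ)
end

section
/- For every odd prime p different from 5, there exist integers u and v such that F_{p^2} = u^2 + p^2 v^2. -/
open Matrix

lemma fibQ_pow (R : Type*) [CommRing R] (n : ℕ) :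
    (!![1, 1; 1, 0] : Matrix (Fin 2) (Fin 2) R) ^ (n + 1) =
      !![(Nat.fib (n + 2) : R), Nat.fib (n + 1); Nat.fib (n + 1), Nat.fib n] := by
  induction n with
  | zero => simp
  | succ n ih =>
      rw [pow_succ, ih, Matrix.mul_fin_two]
      have h1 : Nat.fib (n + 3) = Nat.fib (n + 1) + Nat.fib (n + 2) := by
        rw [show n + 3 = (n+1) + 2 from rfl, Nat.fib_add_two]
      have h2 : Nat.fib (n + 2) = Nat.fib n + Nat.fib (n + 1) := Nat.fib_add_two
      ext i j
      fin_cases i <;> fin_cases j <;> simp [h1, h2] <;> ring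

lemma key (p m : ℕ) (hp : p.Prime) (hm : p = 2 * m + 1) (h5 : p ≠ 5) :
    p ∣ Nat.fib (2 * m) ∨ p ∣ Nat.fib (2 * m + 2) := by
  subst hm
  haveI : Fact (2*m+1).Prime := ⟨hp⟩
  set P := 2*m+1 with hP
  set Q : Matrix (Fin 2) (Fin 2) (ZMod P) := !![1, 1; 1, 0] with hQ
  have hpow : Q ^ P = !![(Nat.fib (2*m + 2) : ZMod P), Nat.fib (2*m + 1); Nat.fib (2*m+1), Nat.fib (2*m)] := by
    exact fibQ_pow (ZMod P) (2*m)
  have htr : trace (Q ^ P) = (trace Q) ^ P := ZMod.trace_pow_card Q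
  have hdet : det (Q ^ P) = (det Q) ^ P := by rw [det_pow]
  rw [hpow, Matrix.trace_fin_two_of, hQ, Matrix.trace_fin_two_of] at htr
  rw [hpow, Matrix.det_fin_two_of, hQ, Matrix.det_fin_two_of] at hdet
  simp only [one_pow, mul_one, one_mul, mul_zero, zero_mul, zero_sub] at htr hdet
  have hneg : ((-1 : ZMod P)) ^ P = -1 := Odd.neg_one_pow ⟨m, by omega⟩
  rw [hneg] at hdet
  rw [show ((1:ZMod P)+0) = 1 from by ring, one_pow] at htr
  set a : ZMod P := (Nat.fib (2*m) : ZMod P) with ha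
  set b : ZMod P := (Nat.fib (2*m+1) : ZMod P) with hbdef
  set c : ZMod P := (Nat.fib (2*m+2) : ZMod P) with hcdef
  have hc : c = b + a := by
    rw [hcdef, show 2*m+2 = (2*m) + 2 from rfl, Nat.fib_add_two]
    push_cast; ring
  have h5' : (5 : ZMod P) ≠ 0 := by
    intro h
    have h' : ((5:ℕ) : ZMod P) = 0 := by exact_mod_cast h
    have := (ZMod.natCast_eq_zero_iff 5 P).mp h'
    exact h5 ((Nat.prime_dvd_prime_iff_eq hp (by norm_num)).mp this)
  have hb : b = 1 - 2 * a := by rw [hc] at htr; linear_combination htr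
  have key5 : (5 * a) * (a - 1) = 0 := by
    rw [hc, hb] at hdet
    linear_combination -hdet
  rcases mul_eq_zero.mp key5 with h | h
  · left
    have ha0 : a = 0 := by
      rcases mul_eq_zero.mp h with h' | h'
      · exact absurd h' h5'
      · exact h'
    exact (ZMod.natCast_eq_zero_iff _ P).mp ha0
  · right
    have : c = 0 := by rw [hc, hb]; linear_combination -h
    exact (ZMod.natCast_eq_zero_iff _ P).mp this

theorem fib_p_sq_repr (p : ℕ) (hp : p.Prime) (hodd : Odd p) (h5 : p ≠ 5) :
    ∃ u v : ℤ, (Nat.fib (p ^ 2) : ℤ) = u ^ 2 + p ^ 2 * v ^ 2 := by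
  obtain ⟨m, hm⟩ := hodd
  have hm' : p = 2 * m + 1 := hm
  set k : ℕ := 2 * m * (m + 1) with hk
  have hp2 : p ^ 2 = 2 * k + 1 := by rw [hm']; ring
  have hdvdk : p ∣ Nat.fib k := by
    rcases key p m hp hm' h5 with h | h
    · exact h.trans (Nat.fib_dvd _ _ ⟨m + 1, by ring⟩)
    · exact h.trans (Nat.fib_dvd _ _ ⟨m, by ring⟩)
  obtain ⟨w, hw⟩ := hdvdk
  refine ⟨(Nat.fib (k + 1) : ℤ), (w : ℤ), ?_⟩
  rw [hp2, Nat.fib_two_mul_add_one, hw]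
  push_cast; ring
end

section
/- Let p be an odd prime, ζ a primitive p-th complex root of unity, α = (1+√5)/2, β = (1-√5)/2, g a generator of (ℤ/pℤ)^*, and R the set of nonzero quadratic residues modulo p. Define Γ = ∏_{r ∈ R} (α - ζ^r β) and Γ' = ∏_{r ∈ R} (α - ζ^{g r} β). Then F_p = Γ · Γ'. -/
/-!
Since `ζ` is a primitive `p`-th root of unity, `α ^ p - β ^ p = ∏_{k < p} (α - ζ ^ k * β)`, whose
factor at `k = 0` is `α - β = √5`; by Binet's formula `F_p` is therefore the product over
`k = 1, …, p - 1`. A primitive root `g` is a quadratic nonresidue, so `r ↦ g * r` maps the nonzero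
residues modulo `p` onto the nonresidues: `Γ'` is the product over the nonresidues, and `Γ * Γ'`
is the product over all `k ≠ 0`.
-/

open Finset

namespace FiniteField

variable {F : Type*} [Field F] [Fintype F]

theorem not_isSquare_of_orderOf_eq_card_sub_one (hF : ringChar F ≠ 2) {a : F}
    (ha : orderOf a = Fintype.card F - 1) : ¬IsSquare a := by
  have hcard := Fintype.one_lt_card (α := F)
  have hodd := odd_card_of_char_ne_two hF
  have ha0 : a ≠ 0 := by
    rintro rfl
    rw [orderOf_eq_zero_iff'.2 fun n hn => by simp [hn.ne']] at ha
    omega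
  intro hsq
  have hdvd := orderOf_dvd_of_pow_eq_one ((isSquare_iff hF ha0).1 hsq)
  rw [ha] at hdvd
  have := Nat.le_of_dvd (by omega) hdvd
  omega

variable [DecidableEq F]

theorem isSquare_mul_iff_of_not_isSquare {a x : F} (ha : ¬IsSquare a) (hx : x ≠ 0) :
    IsSquare (a * x) ↔ ¬IsSquare x := by
  have ha0 : a ≠ 0 := by rintro rfl; exact ha IsSquare.zero
  rw [← quadraticChar_one_iff_isSquare (mul_ne_zero ha0 hx),
    ← quadraticChar_neg_one_iff_not_isSquare, map_mul,
    quadraticChar_neg_one_iff_not_isSquare.2 ha]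
  constructor <;> intro h <;> linear_combination -h

variable {M : Type*} [CommMonoid M]

theorem prod_isSquare_mul_eq_prod_not_isSquare {a : F} (ha : ¬IsSquare a) (f : F → M) :
    ∏ x with x ≠ 0 ∧ IsSquare x, f (a * x) = ∏ x with x ≠ 0 ∧ ¬IsSquare x, f x := by
  have ha0 : a ≠ 0 := by rintro rfl; exact ha IsSquare.zero
  refine prod_nbij' (a * ·) (a⁻¹ * ·) ?_ ?_ ?_ ?_ fun _ _ => rfl
  · intro x hx
    simp only [mem_filter, mem_univ, true_and] at hx ⊢
    exact ⟨mul_ne_zero ha0 hx.1, fun h => (isSquare_mul_iff_of_not_isSquare ha hx.1).1 h hx.2⟩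
  · intro y hy
    simp only [mem_filter, mem_univ, true_and] at hy ⊢
    have hy0 : a⁻¹ * y ≠ 0 := mul_ne_zero (inv_ne_zero ha0) hy.1
    refine ⟨hy0, not_not.1 fun h => hy.2 ?_⟩
    simpa [ha0] using (isSquare_mul_iff_of_not_isSquare ha hy0).2 h
  · intro x _
    simp [ha0]
  · intro y _
    simp [ha0]

theorem prod_isSquare_mul_prod_isSquare_mul_of_not_isSquare {a : F} (ha : ¬IsSquare a)
    (f : F → M) :
    (∏ x with x ≠ 0 ∧ IsSquare x, f x) * ∏ x with x ≠ 0 ∧ IsSquare x, f (a * x) =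
      ∏ x with x ≠ 0, f x := by
  rw [prod_isSquare_mul_eq_prod_not_isSquare ha,
    ← prod_filter_mul_prod_filter_not (univ.filter (· ≠ 0)) IsSquare, filter_filter, filter_filter]

end FiniteField

theorem ZMod.prod_filter_Icc_natCast {M : Type*} [CommMonoid M] {n : ℕ} [NeZero n]
    (P : ZMod n → Prop) [DecidablePred P] (f : ZMod n → M) :
    ∏ r ∈ (Icc 1 (n - 1)).filter (fun r : ℕ => P r), f r = ∏ x with x ≠ 0 ∧ P x, f x := by
  have hn := NeZero.pos n
  refine prod_nbij' (fun r => r) ZMod.val ?_ ?_ ?_ ?_ fun _ _ => rfl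
  · intro r hr
    simp only [mem_filter, mem_Icc, mem_univ, true_and] at hr ⊢
    refine ⟨?_, hr.2⟩
    rw [Ne, ← ZMod.val_eq_zero, ZMod.val_natCast, Nat.mod_eq_of_lt (by omega)]
    omega
  · intro x hx
    simp only [mem_filter, mem_Icc, mem_univ, true_and, ZMod.natCast_val, ZMod.cast_id', id] at hx ⊢
    have := ZMod.val_lt x
    have := (ZMod.val_ne_zero x).2 hx.1
    exact ⟨⟨by omega, by omega⟩, hx.2⟩
  · intro r hr
    simp only [mem_filter, mem_Icc] at hr
    rw [ZMod.val_natCast, Nat.mod_eq_of_lt (by omega)]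
  · intro x _
    simp

theorem IsPrimitiveRoot.prod_zmodChar_sub_mul {R : Type*} [CommRing R] [IsDomain R] {ζ : R}
    {n : ℕ} [NeZero n] (hζ : IsPrimitiveRoot ζ n) (x y : R) :
    ∏ a : ZMod n, (x - AddChar.zmodChar n hζ.pow_eq_one a * y) = x ^ n - y ^ n := by
  rw [hζ.pow_sub_pow_eq_prod_sub_mul x y (NeZero.pos n)]
  refine prod_nbij (AddChar.zmodChar n hζ.pow_eq_one) ?_ ?_ ?_ fun _ _ => rfl
  · intro a _
    rw [Polynomial.mem_nthRootsFinset (NeZero.pos n), ← AddChar.map_nsmul_eq_pow, nsmul_eq_mul,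
      ZMod.natCast_self, zero_mul, AddChar.map_zero_eq_one]
  · intro a _ b _ hab
    exact ZMod.val_injective n (hζ.injOn_pow (by simp [ZMod.val_lt]) (by simp [ZMod.val_lt]) hab)
  · intro μ hμ
    obtain ⟨i, -, rfl⟩ :=
      hζ.eq_pow_of_pow_eq_one ((Polynomial.mem_nthRootsFinset (NeZero.pos n) 1).1 hμ)
    exact ⟨i, mem_univ _, AddChar.zmodChar_apply' _ _⟩

open Real goldenRatio in
theorem Real.natCast_fib_mul_sqrt_five (n : ℕ) : (Nat.fib n : ℝ) * √5 = φ ^ n - ψ ^ n := by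
  rw [coe_fib_eq, div_mul_cancel₀ _ (by positivity)]

open Complex Classical in
theorem fib_eq_gamma_mul_gamma' (p : ℕ) (hp : p.Prime) (hodd : Odd p)
    (ζ : ℂ) (hζ : ζ = Complex.exp (2 * Real.pi * Complex.I / p))
    (α β : ℂ) (hα : α = (1 + Real.sqrt 5) / 2) (hβ : β = (1 - Real.sqrt 5) / 2)
    (g : ℕ) (hg : orderOf (g : ZMod p) = p - 1)
    (R : Finset ℕ) (hR : R = (Finset.Icc 1 (p - 1)).filter (fun r : ℕ => IsSquare (r : ZMod p))) :
    (Nat.fib p : ℂ) =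
      (∏ r ∈ R, (α - ζ ^ r * β)) * (∏ r ∈ R, (α - ζ ^ (g * r) * β)) := by
  have := Fact.mk hp
  have hζp : IsPrimitiveRoot ζ p := hζ ▸ Complex.isPrimitiveRoot_exp p hp.ne_zero
  have hg_sq : ¬IsSquare (g : ZMod p) :=
    FiniteField.not_isSquare_of_orderOf_eq_card_sub_one
      (by rw [ZMod.ringChar_zmod_n]; rintro rfl; exact absurd hodd (by decide)) (by rwa [ZMod.card])
  -- `hR` was elaborated without `Fact p.Prime`, hence with a classical decidability instance
  rw [filter_congr_decidable] at hR
  set e := AddChar.zmodChar p hζp.pow_eq_one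
  have he : ∀ n : ℕ, ζ ^ n = e n := fun n => (AddChar.zmodChar_apply' _ n).symm
  have hΓ : ∏ r ∈ R, (α - ζ ^ r * β) = ∏ x with x ≠ 0 ∧ IsSquare x, (α - e x * β) := by
    simp_rw [hR, he]
    exact ZMod.prod_filter_Icc_natCast IsSquare (fun x => α - e x * β)
  have hΓ' : ∏ r ∈ R, (α - ζ ^ (g * r) * β) =
      ∏ x with x ≠ 0 ∧ IsSquare x, (α - e ((g : ZMod p) * x) * β) := by
    simp_rw [hR, he, Nat.cast_mul]
    exact ZMod.prod_filter_Icc_natCast IsSquare (fun x => α - e ((g : ZMod p) * x) * β)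
  have hroots : (α - β) * ∏ x with x ≠ 0, (α - e x * β) = α ^ p - β ^ p := by
    rw [← hζp.prod_zmodChar_sub_mul, ← mul_prod_erase univ _ (mem_univ 0),
      AddChar.map_zero_eq_one, one_mul, filter_ne']
  have hαβ : α - β = (√5 : ℝ) := by rw [hα, hβ]; ring
  have hbinet : (Nat.fib p : ℂ) * (α - β) = α ^ p - β ^ p := by
    rw [hαβ, hα, hβ]
    exact_mod_cast Real.natCast_fib_mul_sqrt_five p
  rw [hΓ, hΓ', FiniteField.prod_isSquare_mul_prod_isSquare_mul_of_not_isSquare hg_sq]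
  refine mul_right_cancel₀ (b := α - β) ?_ (by rw [hbinet, ← hroots, mul_comm])
  rw [hαβ]
  exact_mod_cast (by positivity : (√5 : ℝ) ≠ 0)
end

section
/- If p ≡ 3 (mod 20) or p ≡ 7 (mod 20) is prime, then there do not exist integers u and v with F_p = u^2 + p v^2. -/
/-!
When 5 is not a square mod the odd prime `p` (by quadratic reciprocity, when
`p ≡ ±2 (mod 5)`), the roots `φ` and `1 - φ` of `X² - X - 1` lie in a quadratic extension of
`𝔽_p` and are swapped by Frobenius, so `φ ^ p = 1 - φ`. Comparing with
`φ ^ p = F_p φ + F_{p-1}` gives `F_p ≡ -1 (mod p)`. A representation `F_p = u² + p v²` would then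
make `-1` a square mod `p`, which is impossible for `p ≡ 3 (mod 4)`.
-/

open Polynomial

section GoldenRoot

variable {R : Type*} [CommRing R] {α : R}

theorem pow_succ_eq_fib_mul_add_fib (hα : α ^ 2 = α + 1) (n : ℕ) :
    α ^ (n + 1) = Nat.fib (n + 1) * α + Nat.fib n := by
  induction n with
  | zero => simp
  | succ n ih =>
    rw [pow_succ, ih, Nat.fib_add_two]
    push_cast
    linear_combination (Nat.fib (n + 1) : R) * hα

theorem isSquare_five_of_sq_eq_add_one (hα : α ^ 2 = α + 1) : IsSquare (5 : R) :=
  ⟨2 * α - 1, by linear_combination (-4 : R) * hα⟩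

theorem pow_char_eq_one_sub_of_sq_eq_add_one {p : ℕ} [Fact p.Prime] [CharP R p] (hp2 : p ≠ 2)
    (hα : α ^ 2 = α + 1) (h5 : (5 : R) ^ (p / 2) = -1) : α ^ p = 1 - α := by
  have hp : p = 2 * (p / 2) + 1 := (Nat.two_mul_div_two_add_one_of_odd
    ((Fact.out : p.Prime).odd_of_ne_two hp2)).symm
  -- `2α - 1` is a square root of 5, so Euler's criterion says Frobenius negates it.
  have hconj : (α + (α - 1)) ^ p = -(α + (α - 1)) := by
    calc (α + (α - 1)) ^ p = ((α + (α - 1)) ^ 2) ^ (p / 2) * (α + (α - 1)) := by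
          rw [← pow_mul, ← pow_succ, ← hp]
      _ = 5 ^ (p / 2) * (α + (α - 1)) := by congr 2; linear_combination 4 * hα
      _ = -(α + (α - 1)) := by rw [h5]; ring
  rw [add_pow_char, sub_pow_char, one_pow] at hconj
  have h2 : IsUnit (2 : R) :=
    (CharP.isUnit_ofNat_iff Fact.out).mpr fun h ↦ hp2 ((Nat.prime_dvd_prime_iff_eq Fact.out
      Nat.prime_two).mp h)
  exact h2.mul_left_cancel (by linear_combination hconj)

end GoldenRoot

theorem eq_zero_of_smul_eq_algebraMap_of_sq_eq_add_one {K A : Type*} [Field K] [CommRing A]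
    [Algebra K A] [Nontrivial A] (h5 : ¬IsSquare (5 : K)) {α : A} (hα : α ^ 2 = α + 1)
    {a b : K} (h : a • α = algebraMap K A b) : a = 0 := by
  by_contra ha
  have hα' : α = algebraMap K A (a⁻¹ * b) := by
    rw [map_mul, ← h, Algebra.smul_def, ← mul_assoc, ← map_mul, inv_mul_cancel₀ ha, map_one,
      one_mul]
  refine h5 (isSquare_five_of_sq_eq_add_one (α := a⁻¹ * b) ?_)
  apply FaithfulSMul.algebraMap_injective K A
  simpa [← hα'] using hα

namespace ZMod

variable {p : ℕ} [Fact p.Prime]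

theorem pow_div_two_eq_neg_one_of_not_isSquare {a : ZMod p} (ha : ¬IsSquare a) :
    a ^ (p / 2) = -1 := by
  have ha0 : a ≠ 0 := by rintro rfl; exact ha ⟨0, by simp⟩
  exact (pow_div_two_eq_neg_one_or_one p ha0).resolve_left
    fun h ↦ ha ((euler_criterion p ha0).mpr h)

theorem fib_eq_neg_one_of_not_isSquare_five (h5 : ¬IsSquare (5 : ZMod p)) :
    (Nat.fib p : ZMod p) = -1 := by
  have hp2 : p ≠ 2 := by rintro rfl; exact h5 ⟨1, rfl⟩
  let f : (ZMod p)[X] := X ^ 2 - X - 1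
  have hf : f.degree = 2 := show (X ^ 2 - X - 1 : (ZMod p)[X]).degree = 2 by compute_degree!
  have : Nontrivial (AdjoinRoot f) := AdjoinRoot.nontrivial f (by rw [hf]; decide)
  have : CharP (AdjoinRoot f) p := charP_of_injective_algebraMap' (ZMod p) p
  set α := AdjoinRoot.root f
  have hα : α ^ 2 = α + 1 := by
    have hroot := AdjoinRoot.eval₂_root f
    simp only [f, eval₂_sub, eval₂_X_pow, eval₂_X, eval₂_one] at hroot
    linear_combination hroot
  have h5' : (5 : AdjoinRoot f) ^ (p / 2) = -1 := by
    simpa only [map_pow, map_neg, map_one, map_ofNat] using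
      congrArg (algebraMap (ZMod p) (AdjoinRoot f)) (pow_div_two_eq_neg_one_of_not_isSquare h5)
  have hαp := pow_char_eq_one_sub_of_sq_eq_add_one hp2 hα h5'
  have hfib := pow_succ_eq_fib_mul_add_fib hα (p - 1)
  rw [Nat.sub_add_cancel (Fact.out : p.Prime).one_le, hαp] at hfib
  have hlin : ((Nat.fib p : ZMod p) + 1) • α = algebraMap _ _ (1 - Nat.fib (p - 1) : ZMod p) := by
    simp only [Algebra.smul_def, map_add, map_sub, map_one, map_natCast]
    linear_combination -hfib
  exact eq_neg_of_add_eq_zero_left (eq_zero_of_smul_eq_algebraMap_of_sq_eq_add_one h5 hα hlin)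

theorem not_isSquare_five (hp2 : p ≠ 2) (h : p % 5 = 2 ∨ p % 5 = 3) :
    ¬IsSquare (5 : ZMod p) := by
  -- The instance `Fact (Nat.Prime 5)` is passed inline: a local one would block `decide` below.
  rw [show (5 : ZMod p) = ((5 : ℕ) : ZMod p) by norm_num,
    ← @exists_sq_eq_prime_iff_of_mod_four_eq_one 5 p ⟨Nat.prime_five⟩ _ rfl hp2, ← natCast_mod]
  rcases h with h | h <;> rw [h] <;> decide

end ZMod

theorem no_repr_of_three_seven_mod_twenty (p : ℕ) (hp : p.Prime)
    (h : p % 20 = 3 ∨ p % 20 = 7) :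
    ¬ ∃ u v : ℤ, (Nat.fib p : ℤ) = u ^ 2 + p * v ^ 2 := by
  have : Fact p.Prime := ⟨hp⟩
  rintro ⟨u, v, huv⟩
  have hfib : (Nat.fib p : ZMod p) = -1 :=
    ZMod.fib_eq_neg_one_of_not_isSquare_five (ZMod.not_isSquare_five (by omega) (by omega))
  have hsq : IsSquare (-1 : ZMod p) := ⟨u, by
    simpa [hfib, sq] using congrArg (fun z : ℤ ↦ (z : ZMod p)) huv⟩
  exact ZMod.exists_sq_eq_neg_one_iff.mp hsq (by omega)
end

section
/- Let n ≡ 7 (mod 16). Then there exist positive integers u and v such that F_n = u^2 + 9 v^2. -/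
/-! Write `n = 2m + 1`, so that `F_n = F_m ^ 2 + F_(m+1) ^ 2`. When `n ≡ 7 (mod 8)` we have
`4 ∣ m + 1`, hence `F_4 = 3` divides `F_(m+1)` and the second square is `9 v ^ 2`. -/

theorem Nat.three_dvd_fib_of_four_dvd {m : ℕ} (h : 4 ∣ m) : 3 ∣ Nat.fib m :=
  Nat.fib_dvd 4 m h

theorem Nat.exists_fib_eq_sq_add_nine_mul_sq {n : ℕ} (h : n % 8 = 7) :
    ∃ u v : ℕ, 0 < u ∧ 0 < v ∧ Nat.fib n = u ^ 2 + 9 * v ^ 2 := by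
  obtain ⟨m, rfl⟩ : ∃ m, n = 2 * m + 1 := ⟨n / 2, by omega⟩
  obtain ⟨v, hv⟩ := Nat.three_dvd_fib_of_four_dvd (m := m + 1) (by omega)
  have hv_pos : 0 < 3 * v := hv ▸ Nat.fib_pos.mpr (by omega)
  refine ⟨Nat.fib m, v, Nat.fib_pos.mpr (by omega), by omega, ?_⟩
  rw [Nat.fib_two_mul_add_one, hv]
  ring

theorem fib_repr_of_seven_mod_sixteen (n : ℕ) (h : n % 16 = 7) :
    ∃ u v : ℕ, 0 < u ∧ 0 < v ∧ Nat.fib n = u ^ 2 + 9 * v ^ 2 :=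
  Nat.exists_fib_eq_sq_add_nine_mul_sq (by omega)
end
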